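/- For every approval instance, every committee W with |W| = k that maximizes the PAV score among all committees of size k is (ℓ−1)-representative: for every natural number ℓ ≥ 1, every candidate c ∈ C∖W, and every group N' ⊆ N_c with |N'| ≥ ℓ·n/k, the average (1/|N'|)·Σ_{i∈N'} |A_i ∩ W| is at least ℓ−1. -/

import Mathlib

/-!
Adding a candidate `c ∉ W` to an optimal committee `W` gains
`∑_{i ∈ N_c} 1/(|A_i ∩ W| + 1)`. In `W ∪ {c}` the marginal losses of the members of `W`
sum to at most `n` (each voter spreads a total loss of at most `1` over the members it
approves), so some member costs at most `n/k`; swapping it for `c` shows that the gain is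
at most `n/k`. For `N' ⊆ N_c` with `|N'| ≥ ℓn/k`, Cauchy–Schwarz in the form
`|N'|² ≤ (∑ 1/(xᵢ+1)) · (∑ (xᵢ+1))`, with `xᵢ = |A_i ∩ W|`, then gives `∑ xᵢ ≥ (ℓ-1)|N'|`.
-/

open Finset

/-- The PAV score of a committee `W`: `∑_{i ∈ N} ∑_{j=1}^{|A i ∩ W|} 1/j`. -/
def pavScore {V C : Type*} [Fintype V] [DecidableEq C]
    (A : V → Finset C) (W : Finset C) : ℚ :=
  ∑ i : V, ∑ j ∈ Finset.range ((A i ∩ W).card), (1 : ℚ) / (j + 1)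

section

variable {V C : Type*} [Fintype V] [DecidableEq C]

lemma pavScore_eq_sum_harmonic (A : V → Finset C) (W : Finset C) :
    pavScore A W = ∑ i, harmonic (A i ∩ W).card := by
  simp [pavScore, harmonic]

def pavMarginal (A : V → Finset C) (W : Finset C) (c : C) : ℚ :=
  ∑ i, if c ∈ A i then (((A i ∩ W).card : ℚ) + 1)⁻¹ else 0

lemma pavScore_insert (A : V → Finset C) {W : Finset C} {c : C} (hc : c ∉ W) :
    pavScore A (insert c W) = pavScore A W + pavMarginal A W c := by
  simp only [pavScore_eq_sum_harmonic, pavMarginal, ← sum_add_distrib]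
  refine sum_congr rfl fun i _ => ?_
  split_ifs with h
  · rw [inter_insert_of_mem h, card_insert_of_notMem (by simp [hc]), harmonic_succ]
    push_cast
    rfl
  · rw [inter_insert_of_notMem h, add_zero]

lemma pavMarginal_erase (A : V → Finset C) {W : Finset C} {w : C} (hw : w ∈ W) :
    pavMarginal A (W.erase w) w = ∑ i, if w ∈ A i then ((A i ∩ W).card : ℚ)⁻¹ else 0 := by
  refine sum_congr rfl fun i _ => ?_
  split_ifs with h
  · rw [inter_erase, ← card_erase_add_one (mem_inter.2 ⟨h, hw⟩)]
    push_cast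
    rfl
  · rfl

lemma sum_pavMarginal_erase_le_card (A : V → Finset C) {S W : Finset C} (hS : S ⊆ W) :
    ∑ w ∈ S, pavMarginal A (W.erase w) w ≤ Fintype.card V := by
  rw [sum_congr rfl fun w hw => pavMarginal_erase A (hS hw), sum_comm]
  calc _ ≤ ∑ _i : V, (1 : ℚ) := sum_le_sum fun i _ => ?_
    _ = Fintype.card V := by simp
  rw [sum_ite_mem, sum_const, nsmul_eq_mul]
  rcases (A i ∩ W).card.eq_zero_or_pos with h0 | hpos
  · simp [h0]
  · rw [← div_eq_mul_inv, div_le_one (by exact_mod_cast hpos)]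
    exact_mod_cast card_le_card (by rw [inter_comm]; exact inter_subset_inter_left hS)

lemma pavMarginal_le_of_forall_pavScore_le (A : V → Finset C) {W : Finset C} {c : C}
    (hmax : ∀ W' : Finset C, W'.card = W.card → pavScore A W' ≤ pavScore A W)
    (hW : W.Nonempty) (hc : c ∉ W) :
    pavMarginal A W c ≤ Fintype.card V / W.card := by
  set W' := insert c W
  obtain ⟨w, hwW, hloss⟩ : ∃ w ∈ W, pavMarginal A (W'.erase w) w ≤ Fintype.card V / W.card := by
    refine exists_le_of_sum_le hW ?_
    rw [sum_const, nsmul_eq_mul, mul_div_cancel₀ _ (by exact_mod_cast hW.card_pos.ne')]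
    exact sum_pavMarginal_erase_le_card A (subset_insert c W)
  have hwW' : w ∈ W' := mem_insert_of_mem hwW
  have hcard : (W'.erase w).card = W.card := by
    rw [card_erase_of_mem hwW', card_insert_of_notMem hc, Nat.add_sub_cancel]
  have hswap := pavScore_insert A (notMem_erase w W')
  rw [insert_erase hwW', pavScore_insert A hc] at hswap
  linarith [hmax _ hcard]

lemma sum_inv_card_inter_add_one_le_pavMarginal (A : V → Finset C) (W : Finset C) {c : C}
    {N' : Finset V} (hN' : ∀ i ∈ N', c ∈ A i) :
    ∑ i ∈ N', (((A i ∩ W).card : ℚ) + 1)⁻¹ ≤ pavMarginal A W c := by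
  rw [pavMarginal, ← sum_filter]
  exact sum_le_sum_of_subset_of_nonneg (fun i hi => mem_filter.2 ⟨mem_univ i, hN' i hi⟩)
    fun _ _ _ => by positivity

end

lemma sub_one_mul_card_le_sum_of_mul_sum_inv_add_one_le {ι R : Type*} [Field R] [LinearOrder R]
    [IsStrictOrderedRing R] {s : Finset ι} {x : ι → R} {ℓ : R} (hx : ∀ i ∈ s, 0 ≤ x i)
    (hℓ : 0 ≤ ℓ) (h : ℓ * ∑ i ∈ s, (x i + 1)⁻¹ ≤ #s) :
    (ℓ - 1) * #s ≤ ∑ i ∈ s, x i := by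
  rcases s.eq_empty_or_nonempty with rfl | hs
  · simp
  have hpos : ∀ i ∈ s, 0 < x i + 1 := fun i hi => by linarith [hx i hi]
  have hsplit : ∑ i ∈ s, (x i + 1) = ∑ i ∈ s, x i + #s := by simp [sum_add_distrib]
  have hsum : 0 < ∑ i ∈ s, x i + #s := hsplit ▸ sum_pos hpos hs
  have htitu := sq_sum_div_le_sum_sq_div s (fun _ => (1 : R)) hpos
  simp only [sum_const, nsmul_eq_mul, mul_one, one_pow, one_div, hsplit] at htitu
  rw [div_le_iff₀ hsum] at htitu
  have hcard : (0 : R) < #s := by exact_mod_cast hs.card_pos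
  have hmul : ℓ * #s * #s ≤ (∑ i ∈ s, x i + #s) * #s := by
    nlinarith [mul_le_mul_of_nonneg_left htitu hℓ, mul_le_mul_of_nonneg_right h hsum.le]
  linarith [le_of_mul_le_mul_right hmul hcard]

theorem pav_is_ell_minus_one_representative_general {V C : Type*} [Fintype V]
    [DecidableEq C]
    (A : V → Finset C) (k : ℕ) (W : Finset C)
    (hn : 1 ≤ Fintype.card V) (hk1 : 1 ≤ k)
    (hWcard : W.card = k)
    (hmax : ∀ W' : Finset C, W'.card = k → pavScore A W' ≤ pavScore A W) :
    ∀ ℓ : ℕ, 1 ≤ ℓ → ∀ c : C, c ∉ W → ∀ N' : Finset V,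
      (∀ i ∈ N', c ∈ A i) → (ℓ : ℝ) * (Fintype.card V) / k ≤ N'.card →
      (ℓ : ℝ) - 1 ≤ (1 / (N'.card : ℝ)) * ∑ i ∈ N', ((A i ∩ W).card : ℝ) := by
  intro ℓ hℓ c hc N' hN' hN'card
  have hW : W.Nonempty := card_pos.1 (by omega)
  have hgain : ∑ i ∈ N', (((A i ∩ W).card : ℝ) + 1)⁻¹ ≤ Fintype.card V / k := by
    have h := (sum_inv_card_inter_add_one_le_pavMarginal A W hN').trans
      (pavMarginal_le_of_forall_pavScore_le A (hWcard ▸ hmax) hW hc)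
    rw [hWcard] at h
    simpa using (Rat.cast_le (K := ℝ)).2 h
  have hN'pos : (0 : ℝ) < N'.card := hN'card.trans_lt' <| div_pos
    (mul_pos (by exact_mod_cast hℓ) (by exact_mod_cast hn)) (by exact_mod_cast hk1)
  rw [one_div_mul_eq_div, le_div_iff₀ hN'pos]
  refine sub_one_mul_card_le_sum_of_mul_sum_inv_add_one_le (fun _ _ => by positivity)
    (by positivity) ?_
  calc (ℓ : ℝ) * ∑ i ∈ N', (((A i ∩ W).card : ℝ) + 1)⁻¹
      ≤ ℓ * (Fintype.card V / k) := by gcongr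
    _ = ℓ * Fintype.card V / k := (mul_div_assoc ..).symm
    _ ≤ N'.card := hN'card

/-- every committee of size `k` maximizing the PAV score among all
committees of size `k` is `(ℓ−1)`-representative: for every `ℓ ≥ 1`, candidate
`c ∉ W`, and group `N' ⊆ N_c` with `|N'| ≥ ℓ·n/k`, the average
`(1/|N'|)·∑_{i∈N'} |A i ∩ W|` is at least `ℓ − 1`. -/
theorem pav_is_ell_minus_one_representative {V C : Type*} [Fintype V] [Fintype C]
    [DecidableEq V] [DecidableEq C]
    (A : V → Finset C) (k : ℕ) (W : Finset C)
    (hn : 1 ≤ Fintype.card V) (hk1 : 1 ≤ k) (hk2 : k ≤ Fintype.card C)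
    (hWcard : W.card = k)
    (hmax : ∀ W' : Finset C, W'.card = k → pavScore A W' ≤ pavScore A W) :
    ∀ ℓ : ℕ, 1 ≤ ℓ → ∀ c : C, c ∉ W → ∀ N' : Finset V,
      (∀ i ∈ N', c ∈ A i) → (ℓ : ℝ) * (Fintype.card V) / k ≤ N'.card →
      (ℓ : ℝ) - 1 ≤ (1 / (N'.card : ℝ)) * ∑ i ∈ N', ((A i ∩ W).card : ℝ) :=
  pav_is_ell_minus_one_representative_general A k W hn hk1 hWcard hmax
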